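/- Let G ∈ H¹(T) be non-null with inner-outer factorization G = G₀·u, where G₀ is outer and u is inner. Suppose g ≥ 0 a.e. on T with G = conj(z φ)·g for some φ ∈ L^∞(T), and let ψ := Re u. Then conj(zφ)·g·(1+ψ) = (1/2)·G₀·(1+u)² and conj(zφ)·g·(1-ψ) = -(1/2)·G₀·(1-u)² a.e. on T; in particular both products belong to H¹(T) and are outer multiples of squares of H^∞ functions when u is nonconstant. -/

import Mathlib

open MeasureTheory Complex Filter Set Metric
open scoped Real ENNReal ComplexConjugate

noncomputable section

instance : Fact (0 < 2 * Real.pi) := ⟨by positivity⟩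

/-- The unit circle, realized as `ℝ / 2πℤ`. -/
abbrev 𝕋 := AddCircle (2 * Real.pi)

/-- The normalized Lebesgue (Haar) measure on the circle. -/
abbrev m : Measure 𝕋 := AddCircle.haarAddCircle

/-- The identity coordinate `z = e^{iθ}` on the circle. -/
def bz : 𝕋 → ℂ := fun x => fourier 1 x

/-- `F` belongs to the Hardy class `H^p` of the open unit disk:
holomorphic with uniformly bounded `p`-means on circles (bounded, if `p = ∞`). -/
def HpDisk (p : ℝ≥0∞) (F : ℂ → ℂ) : Prop :=
  DifferentiableOn ℂ F (ball (0:ℂ) 1) ∧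
    if p = ∞ then ∃ C : ℝ, ∀ w ∈ ball (0:ℂ) 1, ‖F w‖ ≤ C
    else ∃ C : ℝ, ∀ r ∈ Ico (0:ℝ) 1, (∫ x : 𝕋, ‖F ((r : ℂ) * bz x)‖ ^ p.toReal ∂m) ≤ C

/-- `f : 𝕋 → ℂ` is the a.e. radial boundary function of `F : ℂ → ℂ`. -/
def IsBoundary (F : ℂ → ℂ) (f : 𝕋 → ℂ) : Prop :=
  ∀ᵐ x ∂m, Tendsto (fun r : ℝ => F ((r : ℂ) * bz x)) (nhdsWithin 1 (Iio 1)) (nhds (f x))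

/-- `f` belongs to the Hardy space `H^p(𝕋)`: it is the boundary function of some
disk function of class `H^p`. -/
def MemHp (p : ℝ≥0∞) (f : 𝕋 → ℂ) : Prop :=
  ∃ F : ℂ → ℂ, HpDisk p F ∧ IsBoundary F f

/-- `f` belongs to the kernel `K_p(φ)` of the Toeplitz operator `T_φ`:
`f ∈ H^p` and the companion function `conj (z φ f)` is in `H^p`. -/
def MemKp (p : ℝ≥0∞) (φ f : 𝕋 → ℂ) : Prop :=
  MemHp p f ∧ MemHp p (fun x => conj (bz x * φ x * f x))

/-- The set `V_φ = {|f|² : f ∈ K₂(φ), 0 < ‖f‖₂ ≤ 1}` (of a.e.-defined functions). -/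
def Vphi (φ : 𝕋 → ℂ) : Set (𝕋 → ℝ) :=
  {g | ∃ f : 𝕋 → ℂ, MemKp 2 φ f ∧ 0 < eLpNorm f 2 m ∧ eLpNorm f 2 m ≤ 1 ∧
        ∀ᵐ x ∂m, g x = ‖f x‖ ^ 2}

/-- `g` is an extreme point of `V_φ` (in the a.e. sense). -/
def IsExtremeVphi (φ : 𝕋 → ℂ) (g : 𝕋 → ℝ) : Prop :=
  g ∈ Vphi φ ∧ ∀ g₁ ∈ Vphi φ, ∀ g₂ ∈ Vphi φ,
    (∀ᵐ x ∂m, g x = (g₁ x + g₂ x) / 2) → (g₁ =ᵐ[m] g ∧ g₂ =ᵐ[m] g)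

/-- The outer function on the disk with boundary modulus `w`, given by the
Herglotz-type integral formula. -/
def OuterOf (w : 𝕋 → ℝ) : ℂ → ℂ :=
  fun ζ => Complex.exp (∫ x : 𝕋, ((bz x + ζ) / (bz x - ζ)) * (Real.log (w x) : ℂ) ∂m)

/-- `F : ℂ → ℂ` is an outer function: a unimodular constant times `OuterOf w`
for some weight `w ≥ 0` with `log w ∈ L¹`. -/
def IsOuter (F : ℂ → ℂ) : Prop :=
  ∃ (c : ℂ) (w : 𝕋 → ℝ), ‖c‖ = 1 ∧ (∀ᵐ x ∂m, 0 ≤ w x) ∧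
    Integrable (fun x => Real.log (w x)) m ∧
    ∀ ζ ∈ ball (0:ℂ) 1, F ζ = c * OuterOf w ζ

/-- A boundary function `f ∈ H^p(𝕋)` is outer. -/
def IsOuterBnd (p : ℝ≥0∞) (f : 𝕋 → ℂ) : Prop :=
  ∃ F : ℂ → ℂ, HpDisk p F ∧ IsOuter F ∧ IsBoundary F f

/-- `F` is an inner function: holomorphic and bounded by `1` on the disk,
with unimodular boundary values a.e. -/
def IsInner (F : ℂ → ℂ) : Prop :=
  DifferentiableOn ℂ F (ball (0:ℂ) 1) ∧ (∀ w ∈ ball (0:ℂ) 1, ‖F w‖ ≤ 1) ∧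
    ∃ f : 𝕋 → ℂ, IsBoundary F f ∧ ∀ᵐ x ∂m, ‖f x‖ = 1

/-- The inner function `J` divides the inner function `I`. -/
def InnerDivides (J I : ℂ → ℂ) : Prop :=
  ∃ K : ℂ → ℂ, IsInner K ∧ ∀ ζ ∈ ball (0:ℂ) 1, I ζ = J ζ * K ζ

/-- `F` belongs to the Smirnov class `N⁺`: a quotient of an `H^∞` function by an
outer `H^∞` function. -/
def MemNplus (F : ℂ → ℂ) : Prop :=
  ∃ G H : ℂ → ℂ, HpDisk ∞ G ∧ HpDisk ∞ H ∧ IsOuter H ∧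
    ∀ ζ ∈ ball (0:ℂ) 1, F ζ * H ζ = G ζ

/-! On `T` the inner factor satisfies `conj u = 1 / u`, so `u · Re u = (u² + 1) / 2` and hence
`G · (1 ± Re u) = G₀ u (1 ± Re u) = ± ½ G₀ (1 ± u)²`. The right-hand sides lie in `H¹`
because `G₀ ∈ H¹` and `(1 ± u)²` is a bounded holomorphic function of the inner function `u`. -/

lemma norm_bz (x : 𝕋) : ‖bz x‖ = 1 := by
  rw [bz, fourier_apply]
  exact Circle.norm_coe _

lemma ofReal_mul_bz_mem_ball {r : ℝ} (hr : r ∈ Ico (0:ℝ) 1) (x : 𝕋) :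
    (r : ℂ) * bz x ∈ ball (0:ℂ) 1 := by
  rw [mem_ball_zero_iff, norm_mul, norm_bz, mul_one, Complex.norm_real, Real.norm_eq_abs,
    _root_.abs_of_nonneg hr.1]
  exact hr.2

lemma continuous_comp_ofReal_mul_bz {H : ℂ → ℂ} (hH : ContinuousOn H (ball (0:ℂ) 1)) {r : ℝ}
    (hr : r ∈ Ico (0:ℝ) 1) : Continuous fun x : 𝕋 => H ((r : ℂ) * bz x) :=
  hH.comp_continuous (continuous_const.mul (map_continuous (fourier 1)))
    (ofReal_mul_bz_mem_ball hr)

lemma HpDisk.differentiableOn {p : ℝ≥0∞} {F : ℂ → ℂ} (hF : HpDisk p F) :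
    DifferentiableOn ℂ F (ball (0:ℂ) 1) :=
  hF.1

lemma hpDisk_top_iff {F : ℂ → ℂ} :
    HpDisk ∞ F ↔ DifferentiableOn ℂ F (ball (0:ℂ) 1) ∧ ∃ C, ∀ w ∈ ball (0:ℂ) 1, ‖F w‖ ≤ C := by
  rw [HpDisk, if_pos rfl]

lemma hpDisk_iff_of_ne_top {p : ℝ≥0∞} (hp : p ≠ ∞) {F : ℂ → ℂ} :
    HpDisk p F ↔ DifferentiableOn ℂ F (ball (0:ℂ) 1) ∧
      ∃ C, ∀ r ∈ Ico (0:ℝ) 1, (∫ x : 𝕋, ‖F ((r : ℂ) * bz x)‖ ^ p.toReal ∂m) ≤ C := by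
  rw [HpDisk, if_neg hp]

lemma HpDisk.exists_nonneg_bound_of_top {V : ℂ → ℂ} (hV : HpDisk ∞ V) :
    ∃ C, 0 ≤ C ∧ ∀ w ∈ ball (0:ℂ) 1, ‖V w‖ ≤ C := by
  obtain ⟨-, C, hC⟩ := hpDisk_top_iff.1 hV
  exact ⟨C, (norm_nonneg _).trans (hC 0 (mem_ball_self one_pos)), hC⟩

lemma HpDisk.mul {p : ℝ≥0∞} {F V : ℂ → ℂ} (hF : HpDisk p F) (hV : HpDisk ∞ V) :
    HpDisk p (fun ζ => F ζ * V ζ) := by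
  have hFV := hF.differentiableOn.mul hV.differentiableOn
  obtain ⟨D, hD0, hD⟩ := hV.exists_nonneg_bound_of_top
  by_cases hp : p = ∞
  · subst hp
    obtain ⟨C, hC0, hC⟩ := hF.exists_nonneg_bound_of_top
    refine hpDisk_top_iff.2 ⟨hFV, C * D, fun w hw => ?_⟩
    rw [norm_mul]
    exact mul_le_mul (hC w hw) (hD w hw) (norm_nonneg _) hC0
  obtain ⟨-, C, hC⟩ := (hpDisk_iff_of_ne_top hp).1 hF
  refine (hpDisk_iff_of_ne_top hp).2 ⟨hFV, D ^ p.toReal * C, fun r hr => ?_⟩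
  have hq : 0 ≤ p.toReal := ENNReal.toReal_nonneg
  have hint : Integrable (fun x : 𝕋 => D ^ p.toReal * ‖F ((r : ℂ) * bz x)‖ ^ p.toReal) m :=
    (continuous_const.mul (((continuous_comp_ofReal_mul_bz hF.differentiableOn.continuousOn
      hr).norm.rpow_const fun _ => Or.inr hq))).integrable_of_hasCompactSupport
      (isClosed_tsupport _).isCompact
  calc (∫ x : 𝕋, ‖F ((r : ℂ) * bz x) * V ((r : ℂ) * bz x)‖ ^ p.toReal ∂m)
      ≤ ∫ x : 𝕋, D ^ p.toReal * ‖F ((r : ℂ) * bz x)‖ ^ p.toReal ∂m := by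
        refine integral_mono_of_nonneg (ae_of_all _ fun x => by positivity) hint
          (ae_of_all _ fun x => ?_)
        dsimp only
        rw [norm_mul, Real.mul_rpow (norm_nonneg _) (norm_nonneg _), mul_comm]
        gcongr
        exact hD _ (ofReal_mul_bz_mem_ball hr x)
    _ ≤ D ^ p.toReal * C := by
        rw [integral_const_mul]
        exact mul_le_mul_of_nonneg_left (hC r hr) (by positivity)

lemma HpDisk.comp_of_differentiable {V : ℂ → ℂ} (hV : HpDisk ∞ V) {h : ℂ → ℂ}
    (hh : Differentiable ℂ h) : HpDisk ∞ (fun ζ => h (V ζ)) := by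
  obtain ⟨D, -, hD⟩ := hV.exists_nonneg_bound_of_top
  obtain ⟨C, hC⟩ := (isCompact_closedBall (0:ℂ) D).exists_bound_of_continuousOn
    hh.continuous.continuousOn
  refine hpDisk_top_iff.2 ⟨hh.comp_differentiableOn hV.differentiableOn, C, fun w hw => ?_⟩
  exact hC _ (mem_closedBall_zero_iff.2 (hD w hw))

lemma IsBoundary.ae_eq {F : ℂ → ℂ} {f f' : 𝕋 → ℂ} (hf : IsBoundary F f)
    (hf' : IsBoundary F f') : f =ᵐ[m] f' := by
  filter_upwards [hf, hf'] with x hx hx' using tendsto_nhds_unique hx hx'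

lemma IsBoundary.congr_ae {F : ℂ → ℂ} {f f' : 𝕋 → ℂ} (hf : IsBoundary F f)
    (hff' : f =ᵐ[m] f') : IsBoundary F f' := by
  filter_upwards [hf, hff'] with x hx hx' using hx' ▸ hx

lemma IsBoundary.mul {F V : ℂ → ℂ} {f v : 𝕋 → ℂ} (hf : IsBoundary F f) (hv : IsBoundary V v) :
    IsBoundary (fun ζ => F ζ * V ζ) (fun x => f x * v x) := by
  filter_upwards [hf, hv] with x hx hx' using hx.mul hx'

lemma IsBoundary.comp {V : ℂ → ℂ} {v : 𝕋 → ℂ} (hv : IsBoundary V v) {h : ℂ → ℂ}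
    (hh : Continuous h) : IsBoundary (fun ζ => h (V ζ)) (fun x => h (v x)) := by
  filter_upwards [hv] with x hx using (hh.tendsto _).comp hx

lemma MemHp.congr_ae {p : ℝ≥0∞} {f f' : 𝕋 → ℂ} (hf : MemHp p f) (hff' : f =ᵐ[m] f') :
    MemHp p f' := by
  obtain ⟨F, hF, hFf⟩ := hf
  exact ⟨F, hF, hFf.congr_ae hff'⟩

lemma MemHp.mul {p : ℝ≥0∞} {f v : 𝕋 → ℂ} (hf : MemHp p f) (hv : MemHp ∞ v) :
    MemHp p (fun x => f x * v x) := by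
  obtain ⟨F, hF, hFf⟩ := hf
  obtain ⟨V, hV, hVv⟩ := hv
  exact ⟨_, hF.mul hV, hFf.mul hVv⟩

lemma MemHp.comp_of_differentiable {v : 𝕋 → ℂ} (hv : MemHp ∞ v) {h : ℂ → ℂ}
    (hh : Differentiable ℂ h) : MemHp ∞ (fun x => h (v x)) := by
  obtain ⟨V, hV, hVv⟩ := hv
  exact ⟨_, hV.comp_of_differentiable hh, hVv.comp hh.continuous⟩

lemma IsOuterBnd.memHp {p : ℝ≥0∞} {f : 𝕋 → ℂ} (hf : IsOuterBnd p f) : MemHp p f := by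
  obtain ⟨F, hF, -, hFf⟩ := hf
  exact ⟨F, hF, hFf⟩

lemma IsInner.hpDisk_top {U : ℂ → ℂ} (hU : IsInner U) : HpDisk ∞ U :=
  hpDisk_top_iff.2 ⟨hU.1, 1, hU.2.1⟩

lemma IsInner.ae_norm_eq_one {U : ℂ → ℂ} (hU : IsInner U) {u : 𝕋 → ℂ} (hUu : IsBoundary U u) :
    ∀ᵐ x ∂m, ‖u x‖ = 1 := by
  obtain ⟨-, -, f, hUf, hf⟩ := hU
  filter_upwards [hUf.ae_eq hUu, hf] with x hx hfx using hx ▸ hfx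

lemma Complex.mul_one_add_re_of_norm_eq_one {v : ℂ} (hv : ‖v‖ = 1) :
    v * (1 + (v.re : ℂ)) = (1 + v) ^ 2 / 2 := by
  have hvv : v * conj v = 1 := by rw [Complex.mul_conj', hv]; norm_num
  rw [Complex.re_eq_add_conj]
  linear_combination hvv / 2

lemma Complex.mul_one_sub_re_of_norm_eq_one {v : ℂ} (hv : ‖v‖ = 1) :
    v * (1 - (v.re : ℂ)) = -(1 - v) ^ 2 / 2 := by
  have hvv : v * conj v = 1 := by rw [Complex.mul_conj', hv]; norm_num
  rw [Complex.re_eq_add_conj]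
  linear_combination -hvv / 2

theorem stmt14_general (φ : 𝕋 → ℂ)
    (g : 𝕋 → ℝ)
    (G G₀ u : 𝕋 → ℂ)
    (hGdef : ∀ᵐ x ∂m, G x = conj (bz x * φ x) * (g x : ℂ))
    (hout : IsOuterBnd 1 G₀)
    (hinner : ∃ U : ℂ → ℂ, IsInner U ∧ IsBoundary U u)
    (hfact : ∀ᵐ x ∂m, G x = G₀ x * u x) :
    (∀ᵐ x ∂m, conj (bz x * φ x) * ((g x : ℂ) * (1 + ((u x).re : ℂ))) =
        (1/2 : ℂ) * G₀ x * (1 + u x) ^ 2) ∧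
    (∀ᵐ x ∂m, conj (bz x * φ x) * ((g x : ℂ) * (1 - ((u x).re : ℂ))) =
        -(1/2 : ℂ) * G₀ x * (1 - u x) ^ 2) ∧
    MemHp 1 (fun x => conj (bz x * φ x) * ((g x : ℂ) * (1 + ((u x).re : ℂ)))) ∧
    MemHp 1 (fun x => conj (bz x * φ x) * ((g x : ℂ) * (1 - ((u x).re : ℂ)))) := by
  obtain ⟨U, hU, hUu⟩ := hinner
  have hu_top : MemHp ∞ u := ⟨U, hU.hpDisk_top, hUu⟩
  have hGu : ∀ᵐ x ∂m, conj (bz x * φ x) * (g x : ℂ) = G₀ x * u x := by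
    filter_upwards [hGdef, hfact] with x h₁ h₂ using h₁ ▸ h₂
  have hplus : ∀ᵐ x ∂m, conj (bz x * φ x) * ((g x : ℂ) * (1 + ((u x).re : ℂ))) =
      (1/2 : ℂ) * G₀ x * (1 + u x) ^ 2 := by
    filter_upwards [hGu, hU.ae_norm_eq_one hUu] with x hx hux
    rw [← mul_assoc, hx, mul_assoc, Complex.mul_one_add_re_of_norm_eq_one hux]
    ring
  have hminus : ∀ᵐ x ∂m, conj (bz x * φ x) * ((g x : ℂ) * (1 - ((u x).re : ℂ))) =
      -(1/2 : ℂ) * G₀ x * (1 - u x) ^ 2 := by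
    filter_upwards [hGu, hU.ae_norm_eq_one hUu] with x hx hux
    rw [← mul_assoc, hx, mul_assoc, Complex.mul_one_sub_re_of_norm_eq_one hux]
    ring
  refine ⟨hplus, hminus, ?_, ?_⟩
  · refine (hout.memHp.mul (hu_top.comp_of_differentiable
      (h := fun w => (1 + w) ^ 2 / 2) (by fun_prop))).congr_ae ?_
    filter_upwards [hplus] with x hx
    rw [hx]
    ring
  · refine (hout.memHp.mul (hu_top.comp_of_differentiable
      (h := fun w => -(1 - w) ^ 2 / 2) (by fun_prop))).congr_ae ?_
    filter_upwards [hminus] with x hx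
    rw [hx]
    ring

/-- With `G = conj (z φ) · g = G₀ u` (inner-outer factorization,
at the boundary) and `ψ = Re u`, one has `conj (z φ) g (1+ψ) = ½ G₀ (1+u)²` and
`conj (z φ) g (1-ψ) = -½ G₀ (1-u)²` a.e.; in particular both products are in `H¹`. -/
theorem stmt14 (φ : 𝕋 → ℂ) (hφ : MemLp φ ∞ m)
    (g : 𝕋 → ℝ) (hgpos : ∀ᵐ x ∂m, 0 ≤ g x)
    (G G₀ u : 𝕋 → ℂ)
    (hGdef : ∀ᵐ x ∂m, G x = conj (bz x * φ x) * (g x : ℂ))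
    (hG : MemHp 1 G) (hG0 : ¬ G =ᵐ[m] 0)
    (hout : IsOuterBnd 1 G₀)
    (hinner : ∃ U : ℂ → ℂ, IsInner U ∧ IsBoundary U u)
    (hfact : ∀ᵐ x ∂m, G x = G₀ x * u x) :
    (∀ᵐ x ∂m, conj (bz x * φ x) * ((g x : ℂ) * (1 + ((u x).re : ℂ))) =
        (1/2 : ℂ) * G₀ x * (1 + u x) ^ 2) ∧
    (∀ᵐ x ∂m, conj (bz x * φ x) * ((g x : ℂ) * (1 - ((u x).re : ℂ))) =
        -(1/2 : ℂ) * G₀ x * (1 - u x) ^ 2) ∧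
    MemHp 1 (fun x => conj (bz x * φ x) * ((g x : ℂ) * (1 + ((u x).re : ℂ)))) ∧
    MemHp 1 (fun x => conj (bz x * φ x) * ((g x : ℂ) * (1 - ((u x).re : ℂ)))) :=
  stmt14_general φ g G G₀ u hGdef hout hinner hfact
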